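/- arXiv:2211.15297 — 2 statements merged into one kernel-verified Lean document; each statement's English description precedes it below -/
import Mathlib

section
/- Let r > 0 and let u, v : ℝ → ℝ be twice differentiable with (u̇(t), v̇(t)) ≠ (0,0) for all t. Then γ(t) = ψ(u(t), v(t)) is an extrinsic catenary of hyperbolic type (i.e., satisfies the Euler–Lagrange equations of ∫ f(u,v)‖γ̇‖ dt with f(u,v) = cosh(u/r)cosh(v/r)) if and only if its geodesic curvature κ in H²(r) satisfies κ = (1/(r‖γ̇‖))·(−u̇ sinh(v/r)/(cosh(u/r)cosh(v/r)) + v̇ sinh(u/r)) for all t. -/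
/-!
The Euler–Lagrange equations of the weighted length `∫ f ‖γ̇‖ dt` are the two coordinate
components of a single covector normal to `γ̇`: the residual of the first equation is
`-f cosh(u/r) v̇ (κ - ∂_ν log f)` and that of the second is `f cosh(u/r) u̇ (κ - ∂_ν log f)`,
where `ν` is the unit normal. Since `(u̇, v̇) ≠ 0`, the curve is critical exactly when
`κ = ∂_ν log f`, and for `f = cosh(u/r) cosh(v/r)` this normal derivative is the stated
right-hand side. Both residual identities are checked by writing `κ` in the coordinates `(u, v)`
and using `‖γ̇‖² = u̇² + cosh²(u/r) v̇²`.
-/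

noncomputable section
open Real

/-- Minkowski inner product of `E₁³`. -/
def mink3 (X Y : ℝ × ℝ × ℝ) : ℝ := -(X.1 * Y.1) + X.2.1 * Y.2.1 + X.2.2 * Y.2.2

/-- Speed `‖γ̇‖ = √(−ẋ² + ẏ² + ż²)` of a curve `(x,y,z)` in `E₁³`. -/
def speed3 (x y z : ℝ → ℝ) (t : ℝ) : ℝ :=
  Real.sqrt (-(deriv x t) ^ 2 + (deriv y t) ^ 2 + (deriv z t) ^ 2)

/-- Geodesic curvature of the curve `(x,y,z)` in `H²(r)`. -/
def kappaH2 (r : ℝ) (x y z : ℝ → ℝ) (t : ℝ) : ℝ :=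
  -(x t * (deriv (deriv y) t * deriv z t - deriv y t * deriv (deriv z) t)
      - y t * (deriv (deriv x) t * deriv z t - deriv x t * deriv (deriv z) t)
      + z t * (deriv (deriv x) t * deriv y t - deriv x t * deriv (deriv y) t))
    / (r * (speed3 x y z t) ^ 3)

/-- First component of `γ(t) = ψ(u(t), v(t))` (semi-geodesic parametrization). -/
def gX (r : ℝ) (u v : ℝ → ℝ) (t : ℝ) : ℝ :=
  r * Real.cosh (u t / r) * Real.cosh (v t / r)

/-- Second component of `γ(t) = ψ(u(t), v(t))`. -/
def gY (r : ℝ) (u v : ℝ → ℝ) (t : ℝ) : ℝ :=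
  r * Real.cosh (u t / r) * Real.sinh (v t / r)

/-- Third component of `γ(t) = ψ(u(t), v(t))`. -/
def gZ (r : ℝ) (u v : ℝ → ℝ) (t : ℝ) : ℝ :=
  r * Real.sinh (u t / r)

/-- `‖γ̇‖` in semi-geodesic coordinates: `√(u̇² + cosh²(u/r) v̇²)`. -/
def speedSG (r : ℝ) (u v : ℝ → ℝ) (t : ℝ) : ℝ :=
  Real.sqrt ((deriv u t) ^ 2 + (Real.cosh (u t / r)) ^ 2 * (deriv v t) ^ 2)

/-- Geodesic curvature of `γ(t) = ψ(u(t), v(t))` in `H²(r)`. -/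
def kappaSG (r : ℝ) (u v : ℝ → ℝ) (t : ℝ) : ℝ :=
  kappaH2 r (gX r u v) (gY r u v) (gZ r u v) t

/-- The Euler–Lagrange equations of the functional `∫ f(u,v) ‖γ̇‖ dt` in
semi-geodesic coordinates. -/
def EulerLagrange (r : ℝ) (f : ℝ → ℝ → ℝ) (u v : ℝ → ℝ) : Prop :=
  ∀ t : ℝ,
    deriv (fun a => f a (v t)) (u t) * speedSG r u v t
        + f (u t) (v t) * Real.sinh (u t / r) * Real.cosh (u t / r) * (deriv v t) ^ 2
          / (r * speedSG r u v t)
      = deriv (fun s => f (u s) (v s) * deriv u s / speedSG r u v s) t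
    ∧ deriv (fun b => f (u t) b) (v t) * speedSG r u v t
      = deriv (fun s =>
          f (u s) (v s) * deriv v s * (Real.cosh (u s / r)) ^ 2 / speedSG r u v s) t

open Function

theorem hasDerivAt_comp_uncurry {f : ℝ → ℝ → ℝ} {x y : ℝ → ℝ} {t : ℝ}
    (hf : DifferentiableAt ℝ (uncurry f) (x t, y t)) (hx : DifferentiableAt ℝ x t)
    (hy : DifferentiableAt ℝ y t) :
    HasDerivAt (fun s => f (x s) (y s))
      (deriv (fun a => f a (y t)) (x t) * deriv x t
        + deriv (fun b => f (x t) b) (y t) * deriv y t) t := by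
  have hL := hf.hasFDerivAt
  set L := fderiv ℝ (uncurry f) (x t, y t)
  have hfa : deriv (fun a => f a (y t)) (x t) = L (1, 0) :=
    (hL.comp_hasDerivAt_of_eq (x t)
      ((hasDerivAt_id' (x t)).prodMk (hasDerivAt_const (x t) (y t))) rfl).deriv
  have hfb : deriv (fun b => f (x t) b) (y t) = L (0, 1) :=
    (hL.comp_hasDerivAt_of_eq (y t)
      ((hasDerivAt_const (y t) (x t)).prodMk (hasDerivAt_id' (y t))) rfl).deriv
  refine (hL.comp_hasDerivAt t (hx.hasDerivAt.prodMk hy.hasDerivAt)).congr_deriv ?_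
  rw [hfa, hfb, mul_comm, mul_comm (L (0, 1)), ← smul_eq_mul, ← smul_eq_mul, ← L.map_smul,
    ← L.map_smul, ← L.map_add]
  simp

section SemiGeodesic

variable {r : ℝ} {u v : ℝ → ℝ} {t : ℝ}

theorem hasDerivAt_gX (hr : r ≠ 0) (hu : DifferentiableAt ℝ u t) (hv : DifferentiableAt ℝ v t) :
    HasDerivAt (gX r u v) (sinh (u t / r) * cosh (v t / r) * deriv u t
      + cosh (u t / r) * sinh (v t / r) * deriv v t) t := by
  refine (((hu.hasDerivAt.div_const r).cosh.const_mul r).mul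
    (hv.hasDerivAt.div_const r).cosh).congr_deriv ?_
  field_simp

theorem hasDerivAt_gY (hr : r ≠ 0) (hu : DifferentiableAt ℝ u t) (hv : DifferentiableAt ℝ v t) :
    HasDerivAt (gY r u v) (sinh (u t / r) * sinh (v t / r) * deriv u t
      + cosh (u t / r) * cosh (v t / r) * deriv v t) t := by
  refine (((hu.hasDerivAt.div_const r).cosh.const_mul r).mul
    (hv.hasDerivAt.div_const r).sinh).congr_deriv ?_
  field_simp

theorem hasDerivAt_gZ (hr : r ≠ 0) (hu : DifferentiableAt ℝ u t) :
    HasDerivAt (gZ r u v) (cosh (u t / r) * deriv u t) t := by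
  refine ((hu.hasDerivAt.div_const r).sinh.const_mul r).congr_deriv ?_
  field_simp

theorem hasDerivAt_deriv_gX (hr : r ≠ 0) (hu : Differentiable ℝ u) (hv : Differentiable ℝ v)
    (hu2 : DifferentiableAt ℝ (deriv u) t) (hv2 : DifferentiableAt ℝ (deriv v) t) :
    HasDerivAt (deriv (gX r u v))
      ((cosh (u t / r) * cosh (v t / r) * (deriv u t ^ 2 + deriv v t ^ 2)
          + 2 * sinh (u t / r) * sinh (v t / r) * deriv u t * deriv v t) / r
        + sinh (u t / r) * cosh (v t / r) * deriv (deriv u) t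
        + cosh (u t / r) * sinh (v t / r) * deriv (deriv v) t) t := by
  rw [show deriv (gX r u v) = _ from funext fun s => (hasDerivAt_gX hr (hu s) (hv s)).deriv]
  refine ((((hu t).hasDerivAt.div_const r).sinh.mul ((hv t).hasDerivAt.div_const r).cosh
    |>.mul hu2.hasDerivAt).add
    ((((hu t).hasDerivAt.div_const r).cosh.mul ((hv t).hasDerivAt.div_const r).sinh)
    |>.mul hv2.hasDerivAt)).congr_deriv ?_
  simp only [Pi.mul_apply]
  ring

theorem hasDerivAt_deriv_gY (hr : r ≠ 0) (hu : Differentiable ℝ u) (hv : Differentiable ℝ v)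
    (hu2 : DifferentiableAt ℝ (deriv u) t) (hv2 : DifferentiableAt ℝ (deriv v) t) :
    HasDerivAt (deriv (gY r u v))
      ((cosh (u t / r) * sinh (v t / r) * (deriv u t ^ 2 + deriv v t ^ 2)
          + 2 * sinh (u t / r) * cosh (v t / r) * deriv u t * deriv v t) / r
        + sinh (u t / r) * sinh (v t / r) * deriv (deriv u) t
        + cosh (u t / r) * cosh (v t / r) * deriv (deriv v) t) t := by
  rw [show deriv (gY r u v) = _ from funext fun s => (hasDerivAt_gY hr (hu s) (hv s)).deriv]
  refine ((((hu t).hasDerivAt.div_const r).sinh.mul ((hv t).hasDerivAt.div_const r).sinh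
    |>.mul hu2.hasDerivAt).add
    ((((hu t).hasDerivAt.div_const r).cosh.mul ((hv t).hasDerivAt.div_const r).cosh)
    |>.mul hv2.hasDerivAt)).congr_deriv ?_
  simp only [Pi.mul_apply]
  ring

theorem hasDerivAt_deriv_gZ (hr : r ≠ 0) (hu : Differentiable ℝ u)
    (hu2 : DifferentiableAt ℝ (deriv u) t) :
    HasDerivAt (deriv (gZ r u v))
      (sinh (u t / r) * deriv u t ^ 2 / r + cosh (u t / r) * deriv (deriv u) t) t := by
  rw [show deriv (gZ r u v) = _ from funext fun s => (hasDerivAt_gZ (v := v) hr (hu s)).deriv]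
  refine (((hu t).hasDerivAt.div_const r).cosh.mul hu2.hasDerivAt).congr_deriv ?_
  ring

theorem sq_speedSG (r : ℝ) (u v : ℝ → ℝ) (t : ℝ) :
    speedSG r u v t ^ 2 = deriv u t ^ 2 + cosh (u t / r) ^ 2 * deriv v t ^ 2 :=
  Real.sq_sqrt (by positivity)

theorem speedSG_pos (hreg : (deriv u t, deriv v t) ≠ (0, 0)) : 0 < speedSG r u v t := by
  refine Real.sqrt_pos.2 ?_
  rcases eq_or_ne (deriv u t) 0 with hp | hp
  · have hq : deriv v t ≠ 0 := fun hq => hreg (by rw [hp, hq])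
    have := cosh_pos (u t / r)
    positivity
  · positivity

theorem speed3_gX_gY_gZ (hr : r ≠ 0) (hu : DifferentiableAt ℝ u t)
    (hv : DifferentiableAt ℝ v t) :
    speed3 (gX r u v) (gY r u v) (gZ r u v) t = speedSG r u v t := by
  rw [speed3, speedSG, (hasDerivAt_gX hr hu hv).deriv, (hasDerivAt_gY hr hu hv).deriv,
    (hasDerivAt_gZ hr hu).deriv]
  congr 1
  linear_combination deriv u t ^ 2 * cosh_sq (u t / r)
    + (cosh (u t / r) ^ 2 * deriv v t ^ 2 - sinh (u t / r) ^ 2 * deriv u t ^ 2) * cosh_sq (v t / r)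

theorem hasDerivAt_speedSG (hu : DifferentiableAt ℝ u t) (hu2 : DifferentiableAt ℝ (deriv u) t)
    (hv2 : DifferentiableAt ℝ (deriv v) t) (hw : speedSG r u v t ≠ 0) :
    HasDerivAt (speedSG r u v)
      ((deriv u t * deriv (deriv u) t
          + sinh (u t / r) * cosh (u t / r) * deriv u t * deriv v t ^ 2 / r
          + cosh (u t / r) ^ 2 * deriv v t * deriv (deriv v) t) / speedSG r u v t) t := by
  have hinner := (hu2.hasDerivAt.pow 2).add
    (((hu.hasDerivAt.div_const r).cosh.pow 2).mul (hv2.hasDerivAt.pow 2))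
  have hpos : deriv u t ^ 2 + cosh (u t / r) ^ 2 * deriv v t ^ 2 ≠ 0 := fun h0 =>
    hw (by rw [speedSG, h0, Real.sqrt_zero])
  refine (hinner.sqrt hpos).congr_deriv ?_
  change _ / (2 * speedSG r u v t) = _
  simp only [Pi.pow_apply]
  field_simp
  ring

theorem kappaSG_eq (hr : r ≠ 0) (hu : Differentiable ℝ u) (hv : Differentiable ℝ v)
    (hu2 : DifferentiableAt ℝ (deriv u) t) (hv2 : DifferentiableAt ℝ (deriv v) t) :
    kappaSG r u v t =
      -(sinh (u t / r) * deriv v t * (2 * deriv u t ^ 2 + cosh (u t / r) ^ 2 * deriv v t ^ 2)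
          + r * cosh (u t / r) * (deriv u t * deriv (deriv v) t - deriv v t * deriv (deriv u) t))
        / (r * speedSG r u v t ^ 3) := by
  rw [kappaSG, kappaH2, speed3_gX_gY_gZ hr (hu t) (hv t),
    (hasDerivAt_deriv_gX hr hu hv hu2 hv2).deriv, (hasDerivAt_deriv_gY hr hu hv hu2 hv2).deriv,
    (hasDerivAt_deriv_gZ hr hu hu2).deriv, (hasDerivAt_gX hr (hu t) (hv t)).deriv,
    (hasDerivAt_gY hr (hu t) (hv t)).deriv, (hasDerivAt_gZ hr (hu t)).deriv]
  congr 2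
  simp only [gX, gY, gZ]
  set cu := cosh (u t / r)
  set su := sinh (u t / r)
  set cv := cosh (v t / r)
  set sv := sinh (v t / r)
  set p := deriv u t
  set q := deriv v t
  set P := deriv (deriv u) t
  set Q := deriv (deriv v) t
  linear_combination (norm := (field_simp; ring1))
    (-(su * q ^ 3) - su * sv ^ 2 * q ^ 3 - 2 * su * sv ^ 2 * p ^ 2 * q
      + su * cv ^ 2 * q ^ 3 + 2 * su * cv ^ 2 * p ^ 2 * q
      + cu * sv ^ 2 * q * P * r - cu * sv ^ 2 * p * Q * r
      - cu * cv ^ 2 * q * P * r + cu * cv ^ 2 * p * Q * r) * cosh_sq (u t / r)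
    + (su * q ^ 3 + 2 * su * p ^ 2 * q + su ^ 3 * q ^ 3
        - cu * q * P * r + cu * p * Q * r) * cosh_sq (v t / r)

end SemiGeodesic

/-- The derivative of `log f` along the unit normal `(cosh (u/r) v̇, -u̇ / cosh (u/r)) / ‖γ̇‖`
of `γ = ψ(u, v)`, written in the coordinates `(u, v)`. -/
def normalDerivLog (r : ℝ) (f : ℝ → ℝ → ℝ) (u v : ℝ → ℝ) (t : ℝ) : ℝ :=
  (cosh (u t / r) * deriv v t * deriv (fun a => f a (v t)) (u t)
      - deriv u t / cosh (u t / r) * deriv (fun b => f (u t) b) (v t))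
    / (speedSG r u v t * f (u t) (v t))

section EulerLagrange

variable {r : ℝ} {f : ℝ → ℝ → ℝ} {u v : ℝ → ℝ} {t : ℝ}

theorem eulerLagrange_fst_residual (hr : r ≠ 0) (hf : DifferentiableAt ℝ (uncurry f) (u t, v t))
    (hf0 : f (u t) (v t) ≠ 0) (hu : Differentiable ℝ u) (hv : Differentiable ℝ v)
    (hu2 : DifferentiableAt ℝ (deriv u) t) (hv2 : DifferentiableAt ℝ (deriv v) t)
    (hw : speedSG r u v t ≠ 0) :
    deriv (fun a => f a (v t)) (u t) * speedSG r u v t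
        + f (u t) (v t) * sinh (u t / r) * cosh (u t / r) * deriv v t ^ 2 / (r * speedSG r u v t)
        - deriv (fun s => f (u s) (v s) * deriv u s / speedSG r u v s) t
      = -(f (u t) (v t) * cosh (u t / r) * deriv v t)
          * (kappaSG r u v t - normalDerivLog r f u v t) := by
  have hφ : HasDerivAt (fun s => f (u s) (v s) * deriv u s / speedSG r u v s) _ t :=
    ((hasDerivAt_comp_uncurry hf (hu t) (hv t)).mul hu2.hasDerivAt).div
      (hasDerivAt_speedSG (hu t) hu2 hv2 hw) hw
  rw [hφ.deriv, kappaSG_eq hr hu hv hu2 hv2, normalDerivLog]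
  have := cosh_pos (u t / r)
  simp only [Pi.mul_apply]
  field_simp
  linear_combination (r * deriv (fun a => f a (v t)) (u t) * speedSG r u v t ^ 2
      + f (u t) (v t) * sinh (u t / r) * cosh (u t / r) * deriv v t ^ 2
      - r * f (u t) (v t) * deriv (deriv u) t) * sq_speedSG r u v t

theorem eulerLagrange_snd_residual (hr : r ≠ 0) (hf : DifferentiableAt ℝ (uncurry f) (u t, v t))
    (hf0 : f (u t) (v t) ≠ 0) (hu : Differentiable ℝ u) (hv : Differentiable ℝ v)
    (hu2 : DifferentiableAt ℝ (deriv u) t) (hv2 : DifferentiableAt ℝ (deriv v) t)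
    (hw : speedSG r u v t ≠ 0) :
    deriv (fun b => f (u t) b) (v t) * speedSG r u v t
        - deriv (fun s => f (u s) (v s) * deriv v s * cosh (u s / r) ^ 2 / speedSG r u v s) t
      = f (u t) (v t) * cosh (u t / r) * deriv u t
          * (kappaSG r u v t - normalDerivLog r f u v t) := by
  have hφ : HasDerivAt
      (fun s => f (u s) (v s) * deriv v s * cosh (u s / r) ^ 2 / speedSG r u v s) _ t :=
    (((hasDerivAt_comp_uncurry hf (hu t) (hv t)).mul hv2.hasDerivAt).mul
      (((hu t).hasDerivAt.div_const r).cosh.pow 2)).div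
      (hasDerivAt_speedSG (hu t) hu2 hv2 hw) hw
  rw [hφ.deriv, kappaSG_eq hr hu hv hu2 hv2, normalDerivLog]
  have := cosh_pos (u t / r)
  simp only [Pi.mul_apply, Pi.pow_apply]
  field_simp
  linear_combination (r * deriv (fun b => f (u t) b) (v t) * speedSG r u v t ^ 2
      - r * cosh (u t / r) ^ 2 * f (u t) (v t) * deriv (deriv v) t
      - 2 * f (u t) (v t) * cosh (u t / r) * sinh (u t / r) * deriv u t * deriv v t)
    * sq_speedSG r u v t

theorem eulerLagrange_iff_kappaSG_eq_normalDerivLog (hr : r ≠ 0)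
    (hf : ∀ t, DifferentiableAt ℝ (uncurry f) (u t, v t)) (hf0 : ∀ t, f (u t) (v t) ≠ 0)
    (hu : Differentiable ℝ u) (hu2 : Differentiable ℝ (deriv u))
    (hv : Differentiable ℝ v) (hv2 : Differentiable ℝ (deriv v))
    (hreg : ∀ t, (deriv u t, deriv v t) ≠ (0, 0)) :
    EulerLagrange r f u v ↔ ∀ t, kappaSG r u v t = normalDerivLog r f u v t := by
  refine forall_congr' fun t => ?_
  have hw := (speedSG_pos (r := r) (hreg t)).ne'
  rw [← sub_eq_zero, eulerLagrange_fst_residual hr (hf t) (hf0 t) hu hv (hu2 t) (hv2 t) hw,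
    ← sub_eq_zero (a := deriv (fun b => f (u t) b) (v t) * speedSG r u v t),
    eulerLagrange_snd_residual hr (hf t) (hf0 t) hu hv (hu2 t) (hv2 t) hw,
    ← sub_eq_zero (a := kappaSG r u v t)]
  have hpq : ¬(deriv u t = 0 ∧ deriv v t = 0) := fun h => hreg t (by rw [h.1, h.2])
  simp only [neg_mul, neg_eq_zero, mul_eq_zero, hf0 t, (cosh_pos _).ne', false_or]
  tauto

end EulerLagrange

theorem normalDerivLog_cosh_mul_cosh {r : ℝ} (hr : r ≠ 0) (u v : ℝ → ℝ) (t : ℝ) :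
    normalDerivLog r (fun a b => cosh (a / r) * cosh (b / r)) u v t
      = 1 / (r * speedSG r u v t)
        * (-(deriv u t * sinh (v t / r) / (cosh (u t / r) * cosh (v t / r)))
          + deriv v t * sinh (u t / r)) := by
  have hfa : deriv (fun a => cosh (a / r) * cosh (v t / r)) (u t)
      = sinh (u t / r) / r * cosh (v t / r) :=
    ((((hasDerivAt_id' (u t)).div_const r).cosh).mul_const _).deriv.trans (by ring)
  have hfb : deriv (fun b => cosh (u t / r) * cosh (b / r)) (v t)
      = cosh (u t / r) * (sinh (v t / r) / r) :=
    ((((hasDerivAt_id' (v t)).div_const r).cosh).const_mul _).deriv.trans (by ring)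
  rw [normalDerivLog, hfa, hfb]
  have := cosh_pos (u t / r)
  have := cosh_pos (v t / r)
  field_simp
  ring

/-- extrinsic catenaries of hyperbolic type. -/
theorem extrinsic_catenary_hyperbolic_iff (r : ℝ) (hr : 0 < r) (u v : ℝ → ℝ)
    (hu : Differentiable ℝ u) (hu2 : Differentiable ℝ (deriv u))
    (hv : Differentiable ℝ v) (hv2 : Differentiable ℝ (deriv v))
    (hreg : ∀ t : ℝ, (deriv u t, deriv v t) ≠ (0, 0)) :
    EulerLagrange r (fun a b => Real.cosh (a / r) * Real.cosh (b / r)) u v ↔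
      ∀ t : ℝ,
        kappaSG r u v t
          = 1 / (r * speedSG r u v t)
            * (-(deriv u t * Real.sinh (v t / r)
                  / (Real.cosh (u t / r) * Real.cosh (v t / r)))
              + deriv v t * Real.sinh (u t / r)) := by
  have hf : Differentiable ℝ (uncurry fun a b => cosh (a / r) * cosh (b / r)) := by fun_prop
  have hf0 (t : ℝ) : cosh (u t / r) * cosh (v t / r) ≠ 0 :=
    (mul_pos (cosh_pos _) (cosh_pos _)).ne'
  rw [eulerLagrange_iff_kappaSG_eq_normalDerivLog hr.ne' (fun _ => hf _) hf0 hu hu2 hv hv2 hreg]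
  simp only [normalDerivLog_cosh_mul_cosh hr.ne']
end
end

section
/- Let r > 0 and let γ(t) = (x(t), y(t), z(t)) be a twice differentiable curve in H²(r) with spacelike velocity and z(t) > 0 for all t. Embed γ in H³(r) as (x, y, z, 0) and let S_E(t,θ) = (x, y, z cos θ, z sin θ) be the surface of revolution of elliptic type it generates, with unit normal ξ = (1/(r‖γ̇‖))·(yż − ẏz, xż − ẋz, (ẋy − xẏ)cos θ, (ẋy − xẏ)sin θ). Then S_E has vanishing mean curvature H ≡ 0 if and only if the geodesic curvature κ of γ in H²(r) satisfies κ(t) = (x ẏ − ẋ y) / (r z ‖γ̇‖) for all t. -/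
noncomputable section
open Real

/-- Minkowski inner product of `E₁⁴`. -/
def mink4 (X Y : ℝ × ℝ × ℝ × ℝ) : ℝ :=
  -(X.1 * Y.1) + X.2.1 * Y.2.1 + X.2.2.1 * Y.2.2.1 + X.2.2.2 * Y.2.2.2

/-- Partial derivative in the first (curve) parameter of a parametrized surface. -/
def pderivT (S : ℝ → ℝ → ℝ × ℝ × ℝ × ℝ) (t θ : ℝ) : ℝ × ℝ × ℝ × ℝ :=
  (deriv (fun s => (S s θ).1) t, deriv (fun s => (S s θ).2.1) t,
    deriv (fun s => (S s θ).2.2.1) t, deriv (fun s => (S s θ).2.2.2) t)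

/-- Partial derivative in the second (rotation) parameter of a parametrized surface. -/
def pderivTh (S : ℝ → ℝ → ℝ × ℝ × ℝ × ℝ) (t θ : ℝ) : ℝ × ℝ × ℝ × ℝ :=
  (deriv (fun p => (S t p).1) θ, deriv (fun p => (S t p).2.1) θ,
    deriv (fun p => (S t p).2.2.1) θ, deriv (fun p => (S t p).2.2.2) θ)

/-- Mean curvature of a parametrized surface `S` in `H³(r)` with respect to the unit
normal field `ξ`: `H = (g₂₂h₁₁ − 2g₁₂h₁₂ + g₁₁h₂₂)/(2(g₁₁g₂₂ − g₁₂²))`. -/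
def meanCurv (S ξ : ℝ → ℝ → ℝ × ℝ × ℝ × ℝ) (t θ : ℝ) : ℝ :=
  let g11 := mink4 (pderivT S t θ) (pderivT S t θ)
  let g12 := mink4 (pderivT S t θ) (pderivTh S t θ)
  let g22 := mink4 (pderivTh S t θ) (pderivTh S t θ)
  let h11 := mink4 (pderivT (fun a b => pderivT S a b) t θ) (ξ t θ)
  let h12 := mink4 (pderivTh (fun a b => pderivT S a b) t θ) (ξ t θ)
  let h22 := mink4 (pderivTh (fun a b => pderivTh S a b) t θ) (ξ t θ)
  (g22 * h11 - 2 * g12 * h12 + g11 * h22) / (2 * (g11 * g22 - g12 ^ 2))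

/-! The coordinate curves of the elliptic surface of revolution are orthogonal and conjugate
(`g₁₂ = h₁₂ = 0`), so `2H = h₁₁/g₁₁ + h₂₂/g₂₂`. The profile direction contributes
`h₁₁/g₁₁ = −κ` and the rotation circles contribute `h₂₂/g₂₂ = (xẏ − ẋy)/(r z ‖γ̇‖)`; thus
`2H = (xẏ − ẋy)/(r z ‖γ̇‖) − κ`, pointwise in `t` and independently of `θ`. -/

theorem mink4_rotate (a b c a' b' c' θ : ℝ) :
    mink4 (a, b, c * cos θ, c * sin θ) (a', b', c' * cos θ, c' * sin θ)
      = -(a * a') + b * b' + c * c' := by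
  simp only [mink4]
  linear_combination c * c' * sin_sq_add_cos_sq θ

theorem mink4_smul_right (X Y : ℝ × ℝ × ℝ × ℝ) (k : ℝ) : mink4 X (k • Y) = k * mink4 X Y := by
  simp only [mink4, Prod.smul_fst, Prod.smul_snd, smul_eq_mul]
  ring

def ellipticSurface (x y z : ℝ → ℝ) (t θ : ℝ) : ℝ × ℝ × ℝ × ℝ :=
  (x t, y t, z t * cos θ, z t * sin θ)

def ellipticNormal (r : ℝ) (x y z : ℝ → ℝ) (t θ : ℝ) : ℝ × ℝ × ℝ × ℝ :=
  (r * speed3 x y z t)⁻¹ •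
    ((y t * deriv z t - deriv y t * z t, x t * deriv z t - deriv x t * z t,
      (deriv x t * y t - x t * deriv y t) * cos θ,
      (deriv x t * y t - x t * deriv y t) * sin θ) : ℝ × ℝ × ℝ × ℝ)

section EllipticSurface

variable (x y z : ℝ → ℝ)

theorem pderivT_ellipticSurface :
    pderivT (ellipticSurface x y z) = ellipticSurface (deriv x) (deriv y) (deriv z) := by
  ext t θ <;> simp [pderivT, ellipticSurface]

theorem pderivTh_ellipticSurface :
    pderivTh (ellipticSurface x y z) = fun t θ => (0, 0, -(z t * sin θ), z t * cos θ) := by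
  ext t θ <;> simp [pderivTh, ellipticSurface]

theorem pderivTh_pderivTh_ellipticSurface (t θ : ℝ) :
    pderivTh (pderivTh (ellipticSurface x y z)) t θ
      = (0, 0, -(z t * cos θ), -(z t * sin θ)) := by
  rw [pderivTh_ellipticSurface]
  simp [pderivTh]

theorem meanCurv_ellipticSurface (r : ℝ) (hr : r ≠ 0) (t θ : ℝ)
    (hsp : 0 < -(deriv x t) ^ 2 + (deriv y t) ^ 2 + (deriv z t) ^ 2) (hz : z t ≠ 0) :
    meanCurv (ellipticSurface x y z) (ellipticNormal r x y z) t θ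
      = ((x t * deriv y t - deriv x t * y t) / (r * z t * speed3 x y z t)
          - kappaH2 r x y z t) / 2 := by
  have hw : speed3 x y z t ≠ 0 := (Real.sqrt_pos.mpr hsp).ne'
  have hw2 : speed3 x y z t ^ 2 = -(deriv x t) ^ 2 + (deriv y t) ^ 2 + (deriv z t) ^ 2 :=
    Real.sq_sqrt hsp.le
  have hs := sin_sq_add_cos_sq θ
  set S := ellipticSurface x y z
  have g11 : mink4 (pderivT S t θ) (pderivT S t θ) = speed3 x y z t ^ 2 := by
    rw [pderivT_ellipticSurface, ellipticSurface, mink4_rotate, hw2]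
    ring
  have g12 : mink4 (pderivT S t θ) (pderivTh S t θ) = 0 := by
    rw [pderivT_ellipticSurface, pderivTh_ellipticSurface]
    simp only [ellipticSurface, mink4]
    ring
  have g22 : mink4 (pderivTh S t θ) (pderivTh S t θ) = z t ^ 2 := by
    rw [pderivTh_ellipticSurface]
    simp only [mink4]
    linear_combination z t ^ 2 * hs
  have h11 : mink4 (pderivT (pderivT S) t θ) (ellipticNormal r x y z t θ)
      = -(speed3 x y z t ^ 2 * kappaH2 r x y z t) := by
    rw [pderivT_ellipticSurface, pderivT_ellipticSurface, ellipticNormal, mink4_smul_right,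
      ellipticSurface, mink4_rotate, kappaH2]
    field_simp
    ring
  have h12 : mink4 (pderivTh (pderivT S) t θ) (ellipticNormal r x y z t θ) = 0 := by
    rw [pderivT_ellipticSurface, pderivTh_ellipticSurface, ellipticNormal, mink4_smul_right]
    simp only [mink4]
    ring
  have h22 : mink4 (pderivTh (pderivTh S) t θ) (ellipticNormal r x y z t θ)
      = z t * (x t * deriv y t - deriv x t * y t) / (r * speed3 x y z t) := by
    rw [pderivTh_pderivTh_ellipticSurface, ellipticNormal, mink4_smul_right]
    simp only [mink4]
    field_simp
    linear_combination z t * (x t * deriv y t - deriv x t * y t) * hs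
  simp only [meanCurv, g11, g12, g22, h11, h12, h22]
  field_simp
  ring

end EllipticSurface

theorem minimal_elliptic_iff_general (r : ℝ) (hr : 0 < r) (x y z : ℝ → ℝ)
    (hsp : ∀ t : ℝ, 0 < -(deriv x t) ^ 2 + (deriv y t) ^ 2 + (deriv z t) ^ 2)
    (hz0 : ∀ t : ℝ, 0 < z t) :
    (∀ t θ : ℝ,
      meanCurv (fun t θ => ((x t, y t, z t * Real.cos θ, z t * Real.sin θ) : ℝ × ℝ × ℝ × ℝ))
        (fun t θ =>
          ((r * speed3 x y z t)⁻¹ •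
            ((y t * deriv z t - deriv y t * z t,
              x t * deriv z t - deriv x t * z t,
              (deriv x t * y t - x t * deriv y t) * Real.cos θ,
              (deriv x t * y t - x t * deriv y t) * Real.sin θ) : ℝ × ℝ × ℝ × ℝ))) t θ = 0) ↔
      ∀ t : ℝ,
        kappaH2 r x y z t
          = (x t * deriv y t - deriv x t * y t) / (r * z t * speed3 x y z t) := by
  have hH (t θ : ℝ) := meanCurv_ellipticSurface x y z r hr.ne' t θ (hsp t) (hz0 t).ne'
  refine ⟨fun h t => ?_, fun h t θ => ?_⟩
  · have hH0 := (hH t 0).symm.trans (h t 0)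
    linarith
  · exact (hH t θ).trans (by rw [h t, sub_self, zero_div])

/-- the surface of revolution of elliptic type is minimal iff the
generating curve satisfies the prescribed curvature equation. -/
theorem minimal_elliptic_iff (r : ℝ) (hr : 0 < r) (x y z : ℝ → ℝ)
    (hx : Differentiable ℝ x) (hx2 : Differentiable ℝ (deriv x))
    (hy : Differentiable ℝ y) (hy2 : Differentiable ℝ (deriv y))
    (hz : Differentiable ℝ z) (hz2 : Differentiable ℝ (deriv z))
    (hH2 : ∀ t : ℝ, -(x t) ^ 2 + (y t) ^ 2 + (z t) ^ 2 = -r ^ 2)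
    (hx0 : ∀ t : ℝ, 0 < x t)
    (hsp : ∀ t : ℝ, 0 < -(deriv x t) ^ 2 + (deriv y t) ^ 2 + (deriv z t) ^ 2)
    (hz0 : ∀ t : ℝ, 0 < z t) :
    (∀ t θ : ℝ,
      meanCurv (fun t θ => ((x t, y t, z t * Real.cos θ, z t * Real.sin θ) : ℝ × ℝ × ℝ × ℝ))
        (fun t θ =>
          ((r * speed3 x y z t)⁻¹ •
            ((y t * deriv z t - deriv y t * z t,
              x t * deriv z t - deriv x t * z t,
              (deriv x t * y t - x t * deriv y t) * Real.cos θ,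
              (deriv x t * y t - x t * deriv y t) * Real.sin θ) : ℝ × ℝ × ℝ × ℝ))) t θ = 0) ↔
      ∀ t : ℝ,
        kappaH2 r x y z t
          = (x t * deriv y t - deriv x t * y t) / (r * z t * speed3 x y z t) :=
  minimal_elliptic_iff_general r hr x y z hsp hz0
end
end
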